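/- arXiv:1510.02302 — 2 statements merged into one kernel-verified Lean document; each statement's English description precedes it below -/
import Mathlib

section
/- Let β₀,β₁,β₂,β₁₁,β₁₂,β₂₂ ∈ ℝ and f(y,ẏ) = exp(β₀ + β₁y + β₂ẏ + (β₁₁/2)y² + β₁₂yẏ + (β₂₂/2)ẏ²). Then (2π)⁻¹ ∬_{ℝ²} u·|v| · log|v·f(u,v)| · exp(−(u²+v²)/2) du dv = β₁·√(2/π). Equivalently, for independent standard normals U₁, U₂, E[U₁ |U₂| log|U₂ f(U₁,U₂)|] = β₁√(2/π), which is the moment identity q₀·E'[Z_t |Ż_t| log|Ż_t|] = β₁√(2/π) in the quadratic exponential model. -/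
/-!
With `φ x = exp (-x²/2)` and `q` the quadratic exponent of `f`, we have
`log |v f(u,v)| = log |v| + q(u,v)` for `v ≠ 0`, so the integrand is a polynomial of degree three
in `u` with coefficients separable in `(u, v)`:
`u φ(u) · A(v) + u² φ(u) · |v| (β₁ + β₁₂ v) φ(v) + u³ φ(u) · (β₁₁/2) |v| φ(v)`.
By Fubini each term factors; the odd moments of `φ` vanish, leaving
`(2π)⁻¹ · ∫ u² φ · ∫ |v| (β₁ + β₁₂ v) φ = (2π)⁻¹ · √(2π) · 2β₁ = β₁ √(2/π)`.
Integrability of the `log` term comes from `|t log t| ≤ 1 + t²`.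
-/

open Real MeasureTheory

lemma Function.Odd.integral_eq_zero {G : Type*} [MeasurableSpace G] [AddGroup G]
    [MeasurableNeg G] {μ : Measure G} [μ.IsNegInvariant] {f : G → ℝ} (hf : f.Odd) :
    ∫ x, f x ∂μ = 0 := by
  have h := integral_neg_eq_self f μ
  simp_rw [hf.eq, integral_neg] at h
  linarith

lemma integral_prod_mul_add_three {α β : Type*} [MeasurableSpace α] [MeasurableSpace β]
    {μ : Measure α} {ν : Measure β} [SFinite μ] [SFinite ν] {f₁ f₂ f₃ : α → ℝ}
    {g₁ g₂ g₃ : β → ℝ} (hf₁ : Integrable f₁ μ) (hg₁ : Integrable g₁ ν) (hf₂ : Integrable f₂ μ)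
    (hg₂ : Integrable g₂ ν) (hf₃ : Integrable f₃ μ) (hg₃ : Integrable g₃ ν) :
    ∫ z, (f₁ z.1 * g₁ z.2 + f₂ z.1 * g₂ z.2 + f₃ z.1 * g₃ z.2) ∂μ.prod ν
      = (∫ x, f₁ x ∂μ) * (∫ y, g₁ y ∂ν) + (∫ x, f₂ x ∂μ) * (∫ y, g₂ y ∂ν)
        + (∫ x, f₃ x ∂μ) * (∫ y, g₃ y ∂ν) := by
  have h₁ := hf₁.mul_prod hg₁
  have h₂ := hf₂.mul_prod hg₂
  rw [integral_add ?_ (hf₃.mul_prod hg₃), integral_add h₁ h₂, integral_prod_mul, integral_prod_mul,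
    integral_prod_mul]
  exact h₁.add h₂

lemma abs_mul_log_le_one_add_sq (t : ℝ) : |t * log t| ≤ 1 + t ^ 2 := by
  wlog ht : 0 ≤ t generalizing t
  · simpa using this (-t) (by linarith)
  rcases ht.eq_or_lt with rfl | ht0
  · simp
  rcases le_or_gt t 1 with h1 | h1
  · have := abs_log_mul_self_lt t ht0 h1
    rw [mul_comm]; nlinarith [sq_nonneg t]
  · rw [abs_of_nonneg (mul_nonneg ht (log_nonneg h1.le))]
    nlinarith [log_le_sub_one_of_pos ht0]

noncomputable def gaussianWeight (x : ℝ) : ℝ := exp (-x ^ 2 / 2)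

lemma gaussianWeight_pos (x : ℝ) : 0 < gaussianWeight x := exp_pos _

lemma gaussianWeight_neg (x : ℝ) : gaussianWeight (-x) = gaussianWeight x := by
  simp [gaussianWeight]

lemma gaussianWeight_abs (x : ℝ) : gaussianWeight |x| = gaussianWeight x := by
  simp [gaussianWeight]

@[fun_prop]
lemma continuous_gaussianWeight : Continuous gaussianWeight := by
  unfold gaussianWeight; fun_prop

lemma exp_neg_add_sq_div_two (u v : ℝ) :
    exp (-(u ^ 2 + v ^ 2) / 2) = gaussianWeight u * gaussianWeight v := by
  rw [gaussianWeight, gaussianWeight, ← exp_add]; ring_nf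

lemma integrable_pow_mul_gaussianWeight (n : ℕ) :
    Integrable fun x => x ^ n * gaussianWeight x := by
  have := integrable_rpow_mul_exp_neg_mul_sq (b := 1 / 2) (by norm_num) (s := n)
    (by linarith [(Nat.cast_nonneg n : (0 : ℝ) ≤ n)])
  simpa [gaussianWeight, neg_div, div_eq_inv_mul] using this

lemma integrable_abs_mul_pow_mul_gaussianWeight (n : ℕ) :
    Integrable fun x => |x| * x ^ n * gaussianWeight x := by
  refine (integrable_pow_mul_gaussianWeight (n + 1)).mono (by fun_prop)
    (ae_of_all _ fun x => le_of_eq ?_)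
  simp only [norm_mul, norm_pow, Real.norm_eq_abs, abs_abs, pow_succ]
  ring

lemma integrable_abs_mul_gaussianWeight : Integrable fun x => |x| * gaussianWeight x := by
  simpa using integrable_abs_mul_pow_mul_gaussianWeight 0

lemma integrable_abs_mul_log_abs_mul_gaussianWeight :
    Integrable fun x => |x| * log |x| * gaussianWeight x := by
  refine ((integrable_pow_mul_gaussianWeight 0).add (integrable_pow_mul_gaussianWeight 2)).mono'
    (by fun_prop) (ae_of_all _ fun x => ?_)
  calc ‖|x| * log |x| * gaussianWeight x‖ = |x * log x| * gaussianWeight x := by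
        rw [Real.norm_eq_abs, abs_mul, abs_of_pos (gaussianWeight_pos x), log_abs, abs_mul,
          abs_abs, abs_mul]
    _ ≤ (1 + x ^ 2) * gaussianWeight x :=
        mul_le_mul_of_nonneg_right (abs_mul_log_le_one_add_sq x) (gaussianWeight_pos x).le
    _ = _ := by simp only [Pi.add_apply]; ring

lemma integrable_abs_mul_affine_mul_gaussianWeight (a b : ℝ) :
    Integrable fun x => |x| * (a + b * x) * gaussianWeight x := by
  refine ((integrable_abs_mul_gaussianWeight.const_mul a).add
    ((integrable_abs_mul_pow_mul_gaussianWeight 1).const_mul b)).congr (ae_of_all _ fun x => ?_)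
  simp only [Pi.add_apply]; ring

lemma integrable_abs_mul_log_add_quadratic_mul_gaussianWeight (a b c : ℝ) :
    Integrable fun x => |x| * (log |x| + a + b * x + c * x ^ 2) * gaussianWeight x := by
  refine (((integrable_abs_mul_log_abs_mul_gaussianWeight.add
    (integrable_abs_mul_gaussianWeight.const_mul a)).add
    ((integrable_abs_mul_pow_mul_gaussianWeight 1).const_mul b)).add
    ((integrable_abs_mul_pow_mul_gaussianWeight 2).const_mul c)).congr (ae_of_all _ fun x => ?_)
  simp only [Pi.add_apply]; ring

lemma integral_pow_mul_gaussianWeight_of_odd {n : ℕ} (hn : Odd n) :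
    ∫ x, x ^ n * gaussianWeight x = 0 :=
  Function.Odd.integral_eq_zero fun x => by rw [hn.neg_pow, gaussianWeight_neg, neg_mul]

lemma integral_abs_mul_pow_mul_gaussianWeight_of_odd {n : ℕ} (hn : Odd n) :
    ∫ x, |x| * x ^ n * gaussianWeight x = 0 :=
  Function.Odd.integral_eq_zero fun x => by
    rw [abs_neg, hn.neg_pow, gaussianWeight_neg, mul_neg, neg_mul]

lemma integral_abs_rpow_mul_gaussianWeight {s : ℝ} (hs : -1 < s) :
    ∫ x, |x| ^ s * gaussianWeight x = 2 ^ ((s + 1) / 2) * Gamma ((s + 1) / 2) := by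
  have hGamma := integral_rpow_mul_exp_neg_mul_rpow two_pos hs (one_half_pos (α := ℝ))
  simp_rw [rpow_two] at hGamma
  have hweight (x : ℝ) : exp (-(1 / 2) * x ^ 2) = gaussianWeight x := by
    rw [gaussianWeight]; ring_nf
  simp_rw [hweight] at hGamma
  calc ∫ x, |x| ^ s * gaussianWeight x = ∫ x, |x| ^ s * gaussianWeight |x| := by
        simp only [gaussianWeight_abs]
    _ = _ := by
      rw [integral_comp_abs (f := fun y => y ^ s * gaussianWeight y), hGamma, one_div,
        inv_rpow zero_le_two, ← rpow_neg zero_le_two, neg_div, neg_neg]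
      ring

lemma integral_abs_mul_gaussianWeight : ∫ x, |x| * gaussianWeight x = 2 := by
  simpa using integral_abs_rpow_mul_gaussianWeight (s := 1) (by norm_num)

lemma integral_sq_mul_gaussianWeight : ∫ x, x ^ 2 * gaussianWeight x = √(2 * π) := by
  have h := integral_abs_rpow_mul_gaussianWeight (s := 2) (by norm_num)
  simp_rw [rpow_two, sq_abs] at h
  rw [h, show ((2 : ℝ) + 1) / 2 = 1 / 2 + 1 by norm_num, Gamma_add_one one_half_pos.ne',
    Gamma_one_half_eq, rpow_add two_pos, rpow_one, ← sqrt_eq_rpow, sqrt_mul zero_le_two]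
  ring

lemma integral_abs_mul_affine_mul_gaussianWeight (a b : ℝ) :
    ∫ x, |x| * (a + b * x) * gaussianWeight x = 2 * a := by
  have h0 := integrable_abs_mul_gaussianWeight.const_mul a
  have h1 := (integrable_abs_mul_pow_mul_gaussianWeight 1).const_mul b
  calc ∫ x, |x| * (a + b * x) * gaussianWeight x
      = ∫ x, (a * (|x| * gaussianWeight x) + b * (|x| * x ^ 1 * gaussianWeight x)) := by
        congr 1; ext x; ring
    _ = 2 * a := by
      rw [integral_add h0 h1, integral_const_mul, integral_const_mul,
        integral_abs_mul_gaussianWeight, integral_abs_mul_pow_mul_gaussianWeight_of_odd odd_one]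
      ring

lemma log_abs_mul_exp {v : ℝ} (hv : v ≠ 0) (q : ℝ) : log |v * exp q| = log |v| + q := by
  rw [abs_mul, abs_of_pos (exp_pos q), log_mul (abs_ne_zero.2 hv) (exp_pos q).ne', log_exp]

lemma integrand_eq_separable (β₀ β₁ β₂ β₁₁ β₁₂ β₂₂ u v : ℝ) :
    u * |v| * log |v * exp (β₀ + β₁ * u + β₂ * v + β₁₁ / 2 * u ^ 2 + β₁₂ * u * v
      + β₂₂ / 2 * v ^ 2)| * exp (-(u ^ 2 + v ^ 2) / 2)
      = u ^ 1 * gaussianWeight u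
          * (|v| * (log |v| + β₀ + β₂ * v + β₂₂ / 2 * v ^ 2) * gaussianWeight v)
        + u ^ 2 * gaussianWeight u * (|v| * (β₁ + β₁₂ * v) * gaussianWeight v)
        + u ^ 3 * gaussianWeight u * (β₁₁ / 2 * (|v| * gaussianWeight v)) := by
  rcases eq_or_ne v 0 with rfl | hv
  · simp
  · rw [log_abs_mul_exp hv, exp_neg_add_sq_div_two]; ring

lemma inv_two_pi_mul_sqrt_two_pi_mul_two : (2 * π)⁻¹ * (√(2 * π) * 2) = √(2 / π) := by
  rw [show (2 : ℝ) / π = 2 * π / π ^ 2 by field_simp, sqrt_div' _ (sq_nonneg π),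
    sqrt_sq pi_pos.le]
  field_simp

/-- In the quadratic exponential model,
`(2π)⁻¹ ∬ u·|v|·log|v·f(u,v)|·exp(−(u²+v²)/2) du dv = β₁·√(2/π)`
(the moment identity `q₀·E'[Z_t |Ż_t| log|Ż_t|] = β₁√(2/π)`). -/
theorem stmt11 (β₀ β₁ β₂ β₁₁ β₁₂ β₂₂ : ℝ)
    (f : ℝ → ℝ → ℝ)
    (hf : ∀ y ydot : ℝ, f y ydot =
      Real.exp (β₀ + β₁ * y + β₂ * ydot + β₁₁ / 2 * y ^ 2 + β₁₂ * y * ydot + β₂₂ / 2 * ydot ^ 2)) :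
    (2 * π)⁻¹ * ∫ p : ℝ × ℝ,
        p.1 * |p.2| * Real.log |p.2 * f p.1 p.2| * Real.exp (-(p.1 ^ 2 + p.2 ^ 2) / 2)
      = β₁ * Real.sqrt (2 / π) := by
  simp_rw [hf, integrand_eq_separable, Measure.volume_eq_prod]
  rw [integral_prod_mul_add_three (integrable_pow_mul_gaussianWeight 1)
      (integrable_abs_mul_log_add_quadratic_mul_gaussianWeight β₀ β₂ (β₂₂ / 2))
      (integrable_pow_mul_gaussianWeight 2) (integrable_abs_mul_affine_mul_gaussianWeight β₁ β₁₂)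
      (integrable_pow_mul_gaussianWeight 3) (integrable_abs_mul_gaussianWeight.const_mul (β₁₁ / 2)),
    integral_pow_mul_gaussianWeight_of_odd odd_one,
    integral_pow_mul_gaussianWeight_of_odd (n := 3) (by decide),
    integral_sq_mul_gaussianWeight, integral_abs_mul_affine_mul_gaussianWeight,
    ← inv_two_pi_mul_sqrt_two_pi_mul_two]
  ring
end

section
/- Let β₀,β₁,β₂,β₁₁,β₁₂,β₂₂ ∈ ℝ, f(y,ẏ) = exp(β₀ + β₁y + β₂ẏ + (β₁₁/2)y² + β₁₂yẏ + (β₂₂/2)ẏ²), and m₁ := (2π)^{−1/2} ∫_ℝ |u| log|u| exp(−u²/2) du. Then (2π)⁻¹ ∬_{ℝ²} |u·v| · log|v·f(u,v)| · exp(−(u²+v²)/2) du dv = m₁·√(2/π) + (2/π)·(β₀ + β₁₁ + β₂₂). Equivalently, for independent standard normals U₁, U₂, E[|U₁ U₂| log|U₂ f(U₁,U₂)|] = m₁√(2/π) + (2/π)(β₀ + β₁₁ + β₂₂), which is the moment identity q₀·E'[|Z_t Ż_t| log|Ż_t|] = m₁√(2/π) + (2/π)(β₀ + β₁₁ + β₂₂)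 in the quadratic exponential model. -/
/-!
Since `|v| log |v e^q| = |v| (log |v| + q)` and `log f` is a quadratic polynomial, the integrand
is `w(u) w(v) (log |v| + log f(u, v))` with `w(u) = |u| e^{-u²/2}`. Grouping by powers of `u`
splits it into products of one-variable functions, so the double integral is a combination of
the moments `∫ w = 2`, `∫ w(u) u = 0` (oddness), `∫ w(u) u² = 4` and of
`∫ w(v) log |v| = √(2π) m₁`.
-/

open MeasureTheory Real Filter Set Topology

noncomputable def absGaussWeight (u : ℝ) : ℝ := |u| * exp (-u ^ 2 / 2)

lemma continuous_absGaussWeight : Continuous absGaussWeight := by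
  unfold absGaussWeight; fun_prop

lemma integrable_pow_mul_exp_neg_sq_div_two (n : ℕ) :
    Integrable fun u : ℝ => u ^ n * exp (-u ^ 2 / 2) := by
  refine (integrable_rpow_mul_exp_neg_mul_sq (b := 1 / 2) (by norm_num)
    (s := n) (by linarith [n.cast_nonneg (α := ℝ)])).congr (.of_forall fun x => ?_)
  simp only [rpow_natCast]
  ring_nf

lemma integrable_absGaussWeight_mul_pow (n : ℕ) :
    Integrable fun u => absGaussWeight u * u ^ n := by
  refine (integrable_pow_mul_exp_neg_sq_div_two (n + 1)).mono
    (continuous_absGaussWeight.mul (continuous_pow n)).aestronglyMeasurable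
    (.of_forall fun u => le_of_eq ?_)
  simp only [absGaussWeight, norm_mul, norm_pow, Real.norm_eq_abs, abs_abs]
  ring

lemma integrable_absGaussWeight : Integrable absGaussWeight := by
  simpa using integrable_absGaussWeight_mul_pow 0

lemma integrable_absGaussWeight_mul_self : Integrable fun u => absGaussWeight u * u := by
  simpa using integrable_absGaussWeight_mul_pow 1

lemma abs_mul_log_le_sq_add_one {x : ℝ} (hx : 0 ≤ x) : |x * log x| ≤ x ^ 2 + 1 := by
  rcases hx.eq_or_lt with rfl | hx
  · simp
  have h₁ := log_le_sub_one_of_pos hx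
  have h₂ := log_le_sub_one_of_pos (inv_pos.2 hx)
  rw [log_inv] at h₂
  have h₃ : x * x⁻¹ = 1 := mul_inv_cancel₀ hx.ne'
  rw [abs_le]
  constructor <;> nlinarith

lemma integrable_absGaussWeight_mul_log_abs :
    Integrable fun u => absGaussWeight u * log |u| := by
  refine ((integrable_pow_mul_exp_neg_sq_div_two 2).add
    (integrable_pow_mul_exp_neg_sq_div_two 0)).mono'
    (by unfold absGaussWeight; fun_prop) (.of_forall fun u => ?_)
  have h := abs_mul_log_le_sq_add_one (abs_nonneg u)
  rw [sq_abs] at h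
  calc ‖absGaussWeight u * log |u|‖ = |(|u| * log |u|)| * exp (-u ^ 2 / 2) := by
        rw [absGaussWeight, Real.norm_eq_abs, abs_mul, abs_mul, abs_mul, abs_of_pos (exp_pos _)]
        ring
    _ ≤ (u ^ 2 + 1) * exp (-u ^ 2 / 2) := by gcongr
    _ = u ^ 2 * exp (-u ^ 2 / 2) + u ^ 0 * exp (-u ^ 2 / 2) := by ring

lemma tendsto_sq_pow_mul_exp_neg_sq_div_two (n : ℕ) :
    Tendsto (fun x : ℝ => (x ^ 2) ^ n * exp (-x ^ 2 / 2)) atTop (𝓝 0) := by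
  have h := ((tendsto_pow_mul_exp_neg_atTop_nhds_zero n).comp
    ((tendsto_pow_atTop two_ne_zero).atTop_div_const two_pos)).const_mul (2 ^ n)
  rw [mul_zero] at h
  refine h.congr fun x => ?_
  simp only [Function.comp_apply, div_pow]
  field_simp

lemma hasDerivAt_exp_neg_sq_div_two (x : ℝ) :
    HasDerivAt (fun x => exp (-x ^ 2 / 2)) (-x * exp (-x ^ 2 / 2)) x := by
  have h : HasDerivAt (fun x : ℝ => -x ^ 2 / 2) (-x) x :=
    ((hasDerivAt_pow 2 x).neg.div_const 2).congr_deriv (by push_cast; ring)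
  exact h.exp.congr_deriv (mul_comm _ _)

lemma integral_Ioi_mul_exp_neg_sq_div_two : ∫ x in Ioi 0, x * exp (-x ^ 2 / 2) = 1 := by
  have h := integral_Ioi_of_hasDerivAt_of_tendsto (a := 0)
    (f := fun x => -exp (-x ^ 2 / 2)) (f' := fun x => x * exp (-x ^ 2 / 2))
    (by fun_prop : Continuous _).continuousWithinAt
    (fun x _ => (hasDerivAt_exp_neg_sq_div_two x).neg.congr_deriv (by ring))
    (by simpa using (integrable_pow_mul_exp_neg_sq_div_two 1).integrableOn)
    (by simpa using (tendsto_sq_pow_mul_exp_neg_sq_div_two 0).neg)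
  simpa using h

lemma integral_Ioi_pow_three_mul_exp_neg_sq_div_two :
    ∫ x in Ioi 0, x ^ 3 * exp (-x ^ 2 / 2) = 2 := by
  have h := integral_Ioi_of_hasDerivAt_of_tendsto
    (a := 0) (f := fun x => -((x ^ 2 + 2) * exp (-x ^ 2 / 2)))
    (f' := fun x => x ^ 3 * exp (-x ^ 2 / 2))
    (by fun_prop : Continuous _).continuousWithinAt
    (fun x _ => (((hasDerivAt_pow 2 x).add_const 2).mul
      (hasDerivAt_exp_neg_sq_div_two x)).neg.congr_deriv (by push_cast; ring))
    (integrable_pow_mul_exp_neg_sq_div_two 3).integrableOn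
    (by simpa [add_mul] using ((tendsto_sq_pow_mul_exp_neg_sq_div_two 1).add
      ((tendsto_sq_pow_mul_exp_neg_sq_div_two 0).const_mul 2)).neg)
  rw [h]
  norm_num

lemma integral_absGaussWeight : ∫ u, absGaussWeight u = 2 := by
  calc ∫ u, absGaussWeight u = ∫ u, |u| * exp (-|u| ^ 2 / 2) := by
        simp only [absGaussWeight, sq_abs]
    _ = 2 := by
        rw [integral_comp_abs (f := fun x => x * exp (-x ^ 2 / 2)),
          integral_Ioi_mul_exp_neg_sq_div_two, mul_one]

lemma integral_absGaussWeight_mul_self : ∫ u, absGaussWeight u * u = 0 := by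
  have h := integral_neg_eq_self (fun u => absGaussWeight u * u) volume
  simp only [absGaussWeight, abs_neg, neg_sq, mul_neg, integral_neg] at h
  simp only [absGaussWeight]
  linarith

lemma integral_absGaussWeight_mul_sq : ∫ u, absGaussWeight u * u ^ 2 = 4 := by
  calc ∫ u, absGaussWeight u * u ^ 2 = ∫ u, |u| ^ 3 * exp (-|u| ^ 2 / 2) := by
        congr 1; funext u
        rw [absGaussWeight, sq_abs, show |u| ^ 3 = |u| * |u| ^ 2 by ring, sq_abs]
        ring
    _ = 4 := by
        rw [integral_comp_abs (f := fun x => x ^ 3 * exp (-x ^ 2 / 2)),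
          integral_Ioi_pow_three_mul_exp_neg_sq_div_two]
        norm_num

lemma integrable_absGaussWeight_mul_quadratic (a b c : ℝ) :
    Integrable fun u => absGaussWeight u * (a + b * u + c * u ^ 2) := by
  refine (((integrable_absGaussWeight_mul_pow 0).const_mul a).add
    (((integrable_absGaussWeight_mul_pow 1).const_mul b).add
      ((integrable_absGaussWeight_mul_pow 2).const_mul c))).congr (.of_forall fun u => ?_)
  simp only [Pi.add_apply]
  ring

lemma integral_absGaussWeight_mul_quadratic (a b c : ℝ) :
    ∫ u, absGaussWeight u * (a + b * u + c * u ^ 2) = 2 * a + 4 * c := by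
  have hw := integrable_absGaussWeight
  have hw₁ := integrable_absGaussWeight_mul_self
  calc ∫ u, absGaussWeight u * (a + b * u + c * u ^ 2)
      = ∫ u, a * absGaussWeight u + b * (absGaussWeight u * u)
          + c * (absGaussWeight u * u ^ 2) := by
        congr 1; funext u; ring
    _ = a * (∫ u, absGaussWeight u) + b * (∫ u, absGaussWeight u * u)
          + c * ∫ u, absGaussWeight u * u ^ 2 := by
        rw [integral_add ((hw.const_mul a).fun_add (hw₁.const_mul b))
            ((integrable_absGaussWeight_mul_pow 2).const_mul c),
          integral_add (hw.const_mul a) (hw₁.const_mul b),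
          integral_const_mul, integral_const_mul, integral_const_mul]
    _ = 2 * a + 4 * c := by
        rw [integral_absGaussWeight, integral_absGaussWeight_mul_self,
          integral_absGaussWeight_mul_sq]
        ring

lemma integral_absGaussWeight_prod_mul_log_add_quadratic (β₀ β₁ β₂ β₁₁ β₁₂ β₂₂ : ℝ) :
    ∫ p : ℝ × ℝ, absGaussWeight p.1 * absGaussWeight p.2 * (log |p.2| + (β₀ + β₁ * p.1
      + β₂ * p.2 + β₁₁ / 2 * p.1 ^ 2 + β₁₂ * p.1 * p.2 + β₂₂ / 2 * p.2 ^ 2))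
      = 2 * (∫ v, absGaussWeight v * log |v|) + 4 * (β₀ + β₁₁ + β₂₂) := by
  have hw := integrable_absGaussWeight
  have hw₁ := integrable_absGaussWeight_mul_self
  have hw₂ := integrable_absGaussWeight_mul_pow 2
  have hlog := integrable_absGaussWeight_mul_log_abs
  have hq := integrable_absGaussWeight_mul_quadratic
  have hsplit : ∀ p : ℝ × ℝ, absGaussWeight p.1 * absGaussWeight p.2 * (log |p.2| + (β₀
      + β₁ * p.1 + β₂ * p.2 + β₁₁ / 2 * p.1 ^ 2 + β₁₂ * p.1 * p.2 + β₂₂ / 2 * p.2 ^ 2))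
      = absGaussWeight p.1 * (absGaussWeight p.2 * log |p.2|)
        + absGaussWeight p.1 * (absGaussWeight p.2 * (β₀ + β₂ * p.2 + β₂₂ / 2 * p.2 ^ 2))
        + absGaussWeight p.1 * p.1 * (absGaussWeight p.2 * (β₁ + β₁₂ * p.2 + 0 * p.2 ^ 2))
        + absGaussWeight p.1 * p.1 ^ 2
          * (absGaussWeight p.2 * (β₁₁ / 2 + 0 * p.2 + 0 * p.2 ^ 2)) := by
    intro p; ring
  rw [integral_congr_ae (.of_forall hsplit), Measure.volume_eq_prod,
    integral_add (((hw.mul_prod hlog).fun_add (hw.mul_prod (hq _ _ _))).fun_add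
      (hw₁.mul_prod (hq _ _ _))) (hw₂.mul_prod (hq _ _ _)),
    integral_add ((hw.mul_prod hlog).fun_add (hw.mul_prod (hq _ _ _))) (hw₁.mul_prod (hq _ _ _)),
    integral_add (hw.mul_prod hlog) (hw.mul_prod (hq _ _ _)),
    integral_prod_mul absGaussWeight (fun v => absGaussWeight v * log |v|),
    integral_prod_mul absGaussWeight
      (fun v => absGaussWeight v * (β₀ + β₂ * v + β₂₂ / 2 * v ^ 2)),
    integral_prod_mul (fun u => absGaussWeight u * u)
      (fun v => absGaussWeight v * (β₁ + β₁₂ * v + 0 * v ^ 2)),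
    integral_prod_mul (fun u => absGaussWeight u * u ^ 2)
      (fun v => absGaussWeight v * (β₁₁ / 2 + 0 * v + 0 * v ^ 2))]
  simp only [integral_absGaussWeight_mul_quadratic,
    integral_absGaussWeight, integral_absGaussWeight_mul_self, integral_absGaussWeight_mul_sq]
  ring

lemma abs_mul_log_abs_mul_exp (x q : ℝ) : |x| * log |x * exp q| = |x| * (log |x| + q) := by
  rcases eq_or_ne x 0 with rfl | hx
  · simp
  · rw [abs_mul, abs_of_pos (exp_pos q), log_mul (abs_ne_zero.2 hx) (exp_ne_zero q), log_exp]

lemma inv_sqrt_two_mul_pi_mul_sqrt_two_div_pi : (√(2 * π))⁻¹ * √(2 / π) = π⁻¹ := by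
  rw [← sqrt_inv, ← sqrt_mul (by positivity),
    show (2 * π)⁻¹ * (2 / π) = π⁻¹ ^ 2 by field_simp, sqrt_sq (by positivity)]

/-- In the quadratic exponential model, with
`m₁ = (2π)^{−1/2} ∫ |u| log|u| exp(−u²/2) du`,
`(2π)⁻¹ ∬ |u·v|·log|v·f(u,v)|·exp(−(u²+v²)/2) du dv = m₁√(2/π) + (2/π)(β₀ + β₁₁ + β₂₂)`
(the moment identity `q₀·E'[|Z_t Ż_t| log|Ż_t|] = m₁√(2/π) + (2/π)(β₀ + β₁₁ + β₂₂)`). -/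
theorem stmt12 (β₀ β₁ β₂ β₁₁ β₁₂ β₂₂ : ℝ)
    (f : ℝ → ℝ → ℝ)
    (hf : ∀ y ydot : ℝ, f y ydot =
      Real.exp (β₀ + β₁ * y + β₂ * ydot + β₁₁ / 2 * y ^ 2 + β₁₂ * y * ydot + β₂₂ / 2 * ydot ^ 2))
    (m₁ : ℝ)
    (hm₁ : m₁ = (Real.sqrt (2 * π))⁻¹ * ∫ u : ℝ, |u| * Real.log |u| * Real.exp (-u ^ 2 / 2)) :
    (2 * π)⁻¹ * ∫ p : ℝ × ℝ,
        |p.1 * p.2| * Real.log |p.2 * f p.1 p.2| * Real.exp (-(p.1 ^ 2 + p.2 ^ 2) / 2)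
      = m₁ * Real.sqrt (2 / π) + 2 / π * (β₀ + β₁₁ + β₂₂) := by
  have hintegrand (u v : ℝ) :
      |u * v| * log |v * f u v| * exp (-(u ^ 2 + v ^ 2) / 2)
        = absGaussWeight u * absGaussWeight v * (log |v| + (β₀ + β₁ * u + β₂ * v
          + β₁₁ / 2 * u ^ 2 + β₁₂ * u * v + β₂₂ / 2 * v ^ 2)) := by
    rw [hf, abs_mul u, mul_assoc |u|, abs_mul_log_abs_mul_exp, absGaussWeight, absGaussWeight,
      show -(u ^ 2 + v ^ 2) / 2 = -u ^ 2 / 2 + -v ^ 2 / 2 by ring, exp_add]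
    ring
  have hJ : ∫ u, absGaussWeight u * log |u| = ∫ u, |u| * log |u| * exp (-u ^ 2 / 2) := by
    congr 1; funext u; rw [absGaussWeight]; ring
  simp only [hintegrand]
  rw [integral_absGaussWeight_prod_mul_log_add_quadratic, hJ, hm₁, mul_right_comm,
    inv_sqrt_two_mul_pi_mul_sqrt_two_div_pi]
  field_simp
  ring
end
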